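/- Define Q(m,n) = (n^{2n}/n!²) ∑_{m-sparse χ} |\widehat{1_S}(χ)|² (sum over characters with exactly m nonzero coordinates). Then n^m/m! = ∑_{k=0}^{m} C(n−k, m−k) Q(k,n), and consequently Q(m,n) = ∑_{k=0}^m (−1)^{m−k} C(n−k, m−k) n^k/k!. -/

import Mathlib

open Finset

/-- `e(x) = exp(2πi x/n)` for `x ∈ ZMod n`, realizing the identification of the dual of
`ZMod n` with `(1/n)ℤ/ℤ`. -/
noncomputable def eZ (n : ℕ) (x : ZMod n) : ℂ :=
  Complex.exp (2 * Real.pi * Complex.I * (x.val : ℂ) / (n : ℂ))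

/-- The Fourier coefficient `\widehat{1_S}(r₁,…,r_n)` of the set `S` of injective
`n`-tuples in `(ZMod n)ⁿ`, namely `n^{-n} ∑_{x ∈ S} e(-∑ᵢ rᵢ xᵢ)`. -/
noncomputable def fourierS (n : ℕ) [NeZero n] (r : Fin n → ZMod n) : ℂ :=
  ((n : ℂ) ^ n)⁻¹ *
    ∑ x ∈ Finset.univ.filter (fun x : Fin n → ZMod n => Function.Injective x),
      eZ n (-(∑ i, r i * x i))

/-- `Q(m,n) = (n^{2n}/n!²) ∑_{m-sparse χ} |\widehat{1_S}(χ)|²`, the normalized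
`L²`-mass on characters with exactly `m` nonzero coordinates. -/
noncomputable def Qmn (n m : ℕ) [NeZero n] : ℝ :=
  ((n : ℝ) ^ (2 * n) / (n.factorial : ℝ) ^ 2) *
    ∑ r ∈ Finset.univ.filter
        (fun r : Fin n → ZMod n => (Finset.univ.filter (fun i => r i ≠ 0)).card = m),
      ‖fourierS n r‖ ^ 2

/-!
Write `S` for the set of injective tuples and `ψ` for the standard character of `ZMod n`.
Expanding `|1̂_S(r)|²` as a double sum over pairs `(x, y) ∈ S²` and summing over all `r`
supported in a fixed set `T` of coordinates, orthogonality of `ψ` leaves `n ^ #T` times the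
number of pairs that agree on `T`, which is `n! (n - #T)!`. Summing this over the `C(n, m)` sets
`T` of size `m` counts every `k`-sparse character once for each `m`-set containing its support,
that is `C(n - k, m - k)` times; this is the first identity. The second one is its binomial
inversion: `C(n-k, m-k) C(n-j, k-j) = C(n-j, m-j) C(m-j, k-j)`, and the alternating sums of
`C(m-j, ·)` vanish unless `j = m`.
-/

open Function
open scoped Nat

theorem AddChar.map_sum_eq_prod {ι A M : Type*} [AddCommMonoid A] [CommMonoid M]
    (ψ : AddChar A M) (s : Finset ι) (f : ι → A) : ψ (∑ i ∈ s, f i) = ∏ i ∈ s, ψ (f i) := by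
  induction s using Finset.cons_induction with
  | empty => simp
  | cons a s _ ih => rw [sum_cons, prod_cons, map_add_eq_mul, ih]

-- The `DecidablePred` arguments here and below let these lemmas rewrite filters whose
-- decidability instance is specific to the index type (e.g. `Nat.decidableForallFin`).
theorem AddChar.sum_supportedOn_apply_dotProduct {R ι : Type*} [CommRing R] [Fintype R]
    [DecidableEq R] [Fintype ι] [DecidableEq ι] {ψ : AddChar R ℂ} (hψ : ψ.IsPrimitive)
    (T : Finset ι) [DecidablePred fun r : ι → R => ∀ i ∉ T, r i = 0] (z : ι → R) :
    ∑ r ∈ univ.filter (fun r : ι → R => ∀ i ∉ T, r i = 0), ψ (∑ i, r i * z i)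
      = if ∀ i ∈ T, z i = 0 then (Fintype.card R : ℂ) ^ #T else 0 := by
  have hsupp : univ.filter (fun r : ι → R => ∀ i ∉ T, r i = 0)
      = Fintype.piFinset (fun i => if i ∈ T then univ else {0}) := by
    ext r
    simp only [mem_filter, mem_univ, true_and, Fintype.mem_piFinset]
    refine forall_congr' fun i => ?_
    by_cases hi : i ∈ T <;> simp [hi]
  rw [hsupp]
  simp_rw [ψ.map_sum_eq_prod]
  rw [← prod_univ_sum _ fun i c => ψ (c * z i), ← prod_mul_prod_compl T]
  have h_in : ∀ i ∈ T, ∑ c ∈ (if i ∈ T then univ else {0}), ψ (c * z i)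
      = if z i = 0 then (Fintype.card R : ℂ) else 0 := fun i hi => by
    rw [if_pos hi, AddChar.sum_mulShift _ hψ, Nat.cast_ite, Nat.cast_zero]
  have h_out : ∀ i ∈ Tᶜ, ∑ c ∈ (if i ∈ T then univ else {0}), ψ (c * z i) = 1 :=
    fun i hi => by rw [if_neg (mem_compl.mp hi), sum_singleton, zero_mul, ψ.map_zero_eq_one]
  rw [prod_congr rfl h_in, prod_congr rfl h_out, prod_const_one, mul_one, prod_ite_zero,
    prod_const]
  congr

theorem card_filter_injective {α β : Type*} [Fintype α] [DecidableEq α] [Fintype β]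
    [DecidableEq β] :
    #{f : α → β | Injective f} = (Fintype.card β).descFactorial (Fintype.card α) := by
  rw [← Fintype.card_subtype, Fintype.card_congr (Equiv.subtypeInjectiveEquivEmbedding α β),
    Fintype.card_embedding_eq]

theorem card_filter_injective_eqOn {α β : Type*} [Fintype α] [DecidableEq α] [Fintype β]
    (hcard : Fintype.card α = Fintype.card β) {x : α → β} (hx : Injective x) (T : Finset α)
    [DecidablePred fun y : α → β => Injective y ∧ ∀ i ∈ T, y i = x i] :
    #{y : α → β | Injective y ∧ ∀ i ∈ T, y i = x i} = (Fintype.card α - #T)! := by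
  have bij : ∀ {y : α → β}, Injective y → Bijective y := fun hy =>
    (Fintype.bijective_iff_injective_and_card _).2 ⟨hy, hcard⟩
  let ex := Equiv.ofBijective x (bij hx)
  let e : {y : α → β // Injective y ∧ ∀ i ∈ T, y i = x i} ≃
      {σ : Equiv.Perm α // ∀ i, ¬ i ∉ T → σ i = i} :=
    { toFun := fun y => ⟨(Equiv.ofBijective y.1 (bij y.2.1)).trans ex.symm,
        fun i hi => by simp [y.2.2 i (not_not.1 hi), ex]⟩
      invFun := fun σ => ⟨x ∘ σ.1, hx.comp σ.1.injective,
        fun i hi => by simp [σ.2 i (not_not.2 hi)]⟩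
      left_inv := fun y => by ext; exact ex.apply_symm_apply _
      right_inv := fun σ => by ext; simp [ex] }
  rw [← Fintype.card_subtype,
    Fintype.card_congr (e.trans (Equiv.Perm.subtypeEquivSubtypePerm _).symm), Fintype.card_perm,
    Fintype.card_subtype_compl, Fintype.card_coe]

theorem card_filter_powersetCard_univ_subset {ι : Type*} [Fintype ι] [DecidableEq ι]
    (s : Finset ι) (m : ℕ) :
    #{T ∈ powersetCard m (univ : Finset ι) | s ⊆ T}
      = ∑ k ∈ range (m + 1), if #s = k then (Fintype.card ι - k).choose (m - k) else 0 := by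
  rw [sum_ite_eq]
  split_ifs with hs
  · rw [card_filter_powersetCard_subset s univ m (subset_univ s) (by simpa using hs), card_univ]
  · refine card_eq_zero.2 (filter_eq_empty_iff.2 fun T hT hsT => hs ?_)
    simpa [(mem_powersetCard.1 hT).2] using Nat.lt_succ_of_le (card_le_card hsT)

theorem sum_powersetCard_sum_subset_eq_sum_choose_smul {ι α M : Type*} [Fintype ι]
    [DecidableEq ι] [Fintype α] [AddCommMonoid M] (supp : α → Finset ι) (w : α → M) (m : ℕ) :
    ∑ T ∈ powersetCard m univ, ∑ a ∈ univ.filter (fun a => supp a ⊆ T), w a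
      = ∑ k ∈ range (m + 1),
          (Fintype.card ι - k).choose (m - k) •
            ∑ a ∈ univ.filter (fun a => #(supp a) = k), w a := by
  calc ∑ T ∈ powersetCard m univ, ∑ a ∈ univ.filter (fun a => supp a ⊆ T), w a
      = ∑ a, #{T ∈ powersetCard m univ | supp a ⊆ T} • w a := by
        simp_rw [sum_filter]
        rw [sum_comm]
        simp_rw [← sum_filter, sum_const]
    _ = _ := by
        simp_rw [card_filter_powersetCard_univ_subset, sum_smul, smul_sum, sum_filter]
        rw [sum_comm]
        simp_rw [ite_smul, zero_smul]

theorem sum_range_neg_one_pow_sub_mul_choose {R : Type*} [CommRing R] (M : ℕ) :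
    ∑ i ∈ range (M + 1), (-1 : R) ^ (M - i) * M.choose i = 0 ^ M := by
  simpa using (add_pow (1 : R) (-1) M).symm

theorem sum_neg_one_pow_mul_choose_mul_sum_choose_mul {R : Type*} [CommRing R] (N m : ℕ)
    (Q : ℕ → R) :
    ∑ k ∈ range (m + 1), (-1 : R) ^ (m - k) * (N - k).choose (m - k) *
        ∑ j ∈ range (k + 1), ((N - j).choose (k - j) : R) * Q j = Q m := by
  have inner : ∀ j ∈ range (m + 1),
      ∑ k ∈ Ico j (m + 1), (-1 : R) ^ (m - k) * (N - k).choose (m - k) *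
        ((N - j).choose (k - j) * Q j) = (N - j).choose (m - j) * 0 ^ (m - j) * Q j := by
    intro j hj
    rw [sum_Ico_eq_sum_range, show m + 1 - j = m - j + 1 by grind,
      ← sum_range_neg_one_pow_sub_mul_choose, mul_sum, sum_mul]
    refine sum_congr rfl fun i hi => ?_
    have hchoose := Nat.choose_mul (n := N - j) (k := m - j) (s := i) (by grind)
    rw [show N - j - i = N - (j + i) by omega, show m - j - i = m - (j + i) by omega] at hchoose
    rw [show j + i - j = i by omega, show m - j - i = m - (j + i) by omega]
    have hcast : ((N - j).choose (m - j) : R) * (m - j).choose i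
        = (N - j).choose i * (N - (j + i)).choose (m - (j + i)) := by
      rw [← Nat.cast_mul, hchoose, Nat.cast_mul]
    linear_combination -(-1 : R) ^ (m - (j + i)) * Q j * hcast
  calc _ = ∑ k ∈ range (m + 1), ∑ j ∈ range (k + 1),
          (-1 : R) ^ (m - k) * (N - k).choose (m - k) * ((N - j).choose (k - j) * Q j) :=
        sum_congr rfl fun k _ => mul_sum _ _ _
    _ = ∑ j ∈ range (m + 1), ∑ k ∈ Ico j (m + 1),
          (-1 : R) ^ (m - k) * (N - k).choose (m - k) * ((N - j).choose (k - j) * Q j) :=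
        sum_comm' fun k j => by simp only [mem_range, mem_Ico]; omega
    _ = ∑ j ∈ range (m + 1), (N - j).choose (m - j) * 0 ^ (m - j) * Q j := sum_congr rfl inner
    _ = Q m := by
      rw [sum_eq_single_of_mem m (self_mem_range_succ m) fun j hj hjm => by
        rw [zero_pow (by grind), mul_zero, zero_mul]]
      simp

theorem eZ_eq_stdAddChar (n : ℕ) [NeZero n] (x : ZMod n) : eZ n x = ZMod.stdAddChar x := by
  rw [ZMod.stdAddChar_apply, ZMod.toCircle_apply]
  rfl

theorem norm_fourierS_sq (n : ℕ) [NeZero n] (r : Fin n → ZMod n) :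
    ((‖fourierS n r‖ ^ 2 : ℝ) : ℂ) = ((n : ℂ) ^ n)⁻¹ ^ 2 *
      ∑ x ∈ {x : Fin n → ZMod n | Injective x}, ∑ y ∈ {y : Fin n → ZMod n | Injective y},
        ZMod.stdAddChar (∑ i, r i * (y - x) i) := by
  have hconj : ∀ a : ZMod n, starRingEnd ℂ (ZMod.stdAddChar (-a)) = ZMod.stdAddChar a :=
    fun a => by rw [AddChar.map_neg_eq_conj, Complex.conj_conj]
  push_cast
  rw [← Complex.mul_conj', fourierS, map_mul, map_sum]
  simp only [eZ_eq_stdAddChar, hconj, map_inv₀, map_pow, Complex.conj_natCast]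
  rw [mul_mul_mul_comm, ← sq, sum_mul_sum]
  congr 1
  refine sum_congr rfl fun x _ => sum_congr rfl fun y _ => ?_
  rw [← AddChar.map_add_eq_mul]
  congr 1
  simp only [Pi.sub_apply, mul_sub, sum_sub_distrib]
  ring

theorem sum_norm_fourierS_sq_of_supportedOn (n : ℕ) [NeZero n] (T : Finset (Fin n)) :
    ∑ r ∈ {r : Fin n → ZMod n | ∀ i ∉ T, r i = 0}, ‖fourierS n r‖ ^ 2
      = (n : ℝ) ^ #T * n ! * (n - #T)! / (n : ℝ) ^ (2 * n) := by
  have hn : (n : ℂ) ≠ 0 := Nat.cast_ne_zero.2 (NeZero.ne n)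
  have hcard : Fintype.card (Fin n) = Fintype.card (ZMod n) := by simp
  have agreeing_pairs : ∀ x : Fin n → ZMod n, Injective x →
      ∑ y ∈ {y : Fin n → ZMod n | Injective y}, ∑ r ∈ {r : Fin n → ZMod n | ∀ i ∉ T, r i = 0},
        ZMod.stdAddChar (∑ i, r i * (y - x) i) = (n : ℂ) ^ #T * (n - #T)! := by
    intro x hx
    simp_rw [AddChar.sum_supportedOn_apply_dotProduct (ZMod.isPrimitive_stdAddChar n)]
    simp_rw [Pi.sub_apply, sub_eq_zero]
    rw [← sum_filter, sum_const, filter_filter, card_filter_injective_eqOn hcard hx, ZMod.card,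
      Fintype.card_fin, nsmul_eq_mul, mul_comm]
  apply Complex.ofReal_injective
  push_cast
  calc ∑ r ∈ {r : Fin n → ZMod n | ∀ i ∉ T, r i = 0}, ((‖fourierS n r‖ : ℂ) ^ 2)
      = ((n : ℂ) ^ n)⁻¹ ^ 2 * ∑ x ∈ {x : Fin n → ZMod n | Injective x},
          ∑ y ∈ {y : Fin n → ZMod n | Injective y},
          ∑ r ∈ {r : Fin n → ZMod n | ∀ i ∉ T, r i = 0},
            ZMod.stdAddChar (∑ i, r i * (y - x) i) := by
        simp_rw [← Complex.ofReal_pow, norm_fourierS_sq, ← mul_sum]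
        rw [sum_comm]
        simp_rw [sum_comm (s := {r : Fin n → ZMod n | ∀ i ∉ T, r i = 0})]
    _ = (n : ℂ) ^ #T * n ! * (n - #T)! / (n : ℂ) ^ (2 * n) := by
        rw [sum_congr rfl fun x hx => agreeing_pairs x (mem_filter.1 hx).2, sum_const,
          card_filter_injective, ZMod.card, Fintype.card_fin, Nat.descFactorial_self,
          nsmul_eq_mul]
        field_simp
        ring

theorem pow_div_factorial_eq_sum_choose_mul_Qmn (n : ℕ) [NeZero n] {m : ℕ} (hm : m ≤ n) :
    (n : ℝ) ^ m / m ! = ∑ k ∈ range (m + 1), ((n - k).choose (m - k) : ℝ) * Qmn n k := by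
  have hsupp : ∀ T : Finset (Fin n),
      univ.filter (fun r : Fin n → ZMod n => univ.filter (fun i => r i ≠ 0) ⊆ T)
        = univ.filter (fun r : Fin n → ZMod n => ∀ i ∉ T, r i = 0) := fun T => by
    refine filter_congr fun r _ => ?_
    simp [subset_iff, not_imp_comm]
  have hsize : ∀ T ∈ powersetCard m (univ : Finset (Fin n)),
      (n : ℝ) ^ #T * n ! * (n - #T)! / (n : ℝ) ^ (2 * n)
        = (n : ℝ) ^ m * n ! * (n - m)! / (n : ℝ) ^ (2 * n) := fun T hT => by
    rw [(mem_powersetCard.1 hT).2]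
  have hcount := sum_powersetCard_sum_subset_eq_sum_choose_smul
    (fun r : Fin n → ZMod n => univ.filter (fun i => r i ≠ 0)) (fun r => ‖fourierS n r‖ ^ 2) m
  simp_rw [hsupp, sum_norm_fourierS_sq_of_supportedOn] at hcount
  rw [sum_congr rfl hsize, sum_const, card_powersetCard, card_univ, Fintype.card_fin] at hcount
  have hn : (n : ℝ) ≠ 0 := Nat.cast_ne_zero.2 (NeZero.ne n)
  have hchoose : (n.choose m : ℝ) ≠ 0 := Nat.cast_ne_zero.2 (Nat.choose_pos hm).ne'
  have hfact : (n.choose m : ℝ) * m ! * (n - m)! = n ! := by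
    exact_mod_cast Nat.choose_mul_factorial_mul_factorial hm
  calc (n : ℝ) ^ m / m !
      = ((n : ℝ) ^ (2 * n) / (n ! : ℝ) ^ 2) *
          (n.choose m • ((n : ℝ) ^ m * n ! * (n - m)! / (n : ℝ) ^ (2 * n))) := by
        rw [nsmul_eq_mul, ← hfact]
        field_simp
    _ = ∑ k ∈ range (m + 1), ((n - k).choose (m - k) : ℝ) * Qmn n k := by
        rw [hcount, mul_sum]
        simp only [Qmn, nsmul_eq_mul]
        refine sum_congr rfl fun k _ => by ring

/-- `n^m/m! = ∑_{k≤m} C(n−k,m−k) Q(k,n)`, and by inversion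
`Q(m,n) = ∑_{k≤m} (−1)^{m−k} C(n−k,m−k) n^k/k!`. -/
theorem Qmn_identities (n m : ℕ) [NeZero n] (hm : m ≤ n) :
    ((n : ℝ) ^ m / m.factorial =
        ∑ k ∈ Finset.range (m + 1), (Nat.choose (n - k) (m - k) : ℝ) * Qmn n k) ∧
      Qmn n m = ∑ k ∈ Finset.range (m + 1),
        (-1 : ℝ) ^ (m - k) * (Nat.choose (n - k) (m - k) : ℝ) * (n : ℝ) ^ k / k.factorial := by
  refine ⟨pow_div_factorial_eq_sum_choose_mul_Qmn n hm, ?_⟩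
  rw [← sum_neg_one_pow_mul_choose_mul_sum_choose_mul n m fun k => Qmn n k]
  refine sum_congr rfl fun k hk => ?_
  rw [mul_div_assoc, pow_div_factorial_eq_sum_choose_mul_Qmn n (by grind)]
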